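/- arXiv:0904.2862 — 6 statements merged into one kernel-verified Lean document; each statement's English description precedes it below -/
import Mathlib

section
/- If two chord diagrams D and D' differ by a second Reidemeister move (D' is obtained from D by adding two parallel chords whose four endpoints occupy two arcs of D, with the two chords linked with exactly the same set of other chords and linked or unlinked with each other according to the move), then a chord of D is even in D if and only if the corresponding chord of D' is even in D'. -/
/-- Two chords `c = {c.1, c.2}` and `d = {d.1, d.2}` (each written with smaller
endpoint first) of a chord diagram are *linked* (interleaved) iff the endpoints
of one separate the endpoints of the other on the circle. -/
def Linked (c d : ℕ × ℕ) : Prop :=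
  (c.1 < d.1 ∧ d.1 < c.2 ∧ c.2 < d.2) ∨ (d.1 < c.1 ∧ c.1 < d.2 ∧ d.2 < c.2)

instance : DecidableRel Linked := fun c d => by unfold Linked; infer_instance

/-- A chord diagram on the `N` points `0, …, N-1` of a circle: a finite set of
chords, each recorded as an ordered pair (smaller endpoint, larger endpoint),
forming a perfect matching of `{0, …, N-1}`. -/
structure IsChordDiagram (N : ℕ) (D : Finset (ℕ × ℕ)) : Prop where
  lt : ∀ c ∈ D, c.1 < c.2 ∧ c.2 < N
  matching : ∀ x < N, ∃! c, c ∈ D ∧ (c.1 = x ∨ c.2 = x)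

lemma linked_symm {c d : ℕ × ℕ} : Linked c d ↔ Linked d c := by
  unfold Linked; tauto

/-- A second Reidemeister move adds two new chords `c1, c2` which are linked
with exactly the same old chords.  Then every old chord `γ` is even in the old
diagram iff it is even in the new diagram. -/
theorem stmt_2 (N : ℕ) (D : Finset (ℕ × ℕ)) (hD : IsChordDiagram N D)
    (c1 c2 : ℕ × ℕ) (hne : c1 ≠ c2) (h1 : c1 ∉ D) (h2 : c2 ∉ D)
    (hpar : ∀ d ∈ D, (Linked d c1 ↔ Linked d c2))
    (γ : ℕ × ℕ) (hγ : γ ∈ D) :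
    (Even ((D.filter fun d => Linked γ d).card) ↔
     Even (((insert c1 (insert c2 D)).filter fun d => Linked γ d).card)) := by
  have hiff : Linked γ c1 ↔ Linked γ c2 := hpar γ hγ
  rw [Finset.filter_insert, Finset.filter_insert]
  by_cases h : Linked γ c1
  · rw [if_pos h, if_pos (hiff.mp h)]
    have hc2 : c2 ∉ D.filter fun d => Linked γ d := fun hc => h2 (Finset.mem_filter.mp hc).1
    have hc1 : c1 ∉ insert c2 (D.filter fun d => Linked γ d) := by
      simp only [Finset.mem_insert]
      rintro (rfl | hc)
      · exact hne rfl
      · exact h1 (Finset.mem_filter.mp hc).1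
    rw [Finset.card_insert_of_notMem hc1, Finset.card_insert_of_notMem hc2]
    simp [Nat.even_add_one, parity_simps]
  · rw [if_neg h, if_neg (fun h' => h (hiff.mpr h'))]
end

section
/- Under a third Reidemeister move on chord diagrams (which changes the mutual position of three pairwise chords among a1,a2,a3 but preserves linkedness of each ai with every other chord), each of the three involved chords ai is even before the move if and only if the corresponding chord a'_i is even after the move, and every other chord's parity is also unchanged. -/
open Finset

lemma linked_comm (c d : ℕ × ℕ) : Linked c d ↔ Linked d c := by
  unfold Linked; tauto

lemma linked_irrefl (c : ℕ × ℕ) : ¬ Linked c c := by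
  unfold Linked; omega

lemma card_filter_union_image {α ι : Type*} [DecidableEq α] [Fintype ι] (s : Finset α)
    {f : ι → α} (hf : Function.Injective f) (hs : ∀ i, f i ∉ s)
    (p : α → Prop) [DecidablePred p] :
    ((s ∪ univ.image f).filter p).card =
      (s.filter p).card + (univ.filter fun i => p (f i)).card := by
  have hdisj : Disjoint s (univ.image f) := by
    simpa [disjoint_right] using hs
  rw [filter_union, card_union_of_disjoint (disjoint_filter_filter hdisj), filter_image,
    card_image_of_injective _ hf]

lemma card_filter_add_card_filter_of_forall_ne_iff_not {ι : Type*} [Fintype ι] [DecidableEq ι]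
    {p q : ι → Prop} [DecidablePred p] [DecidablePred q] {i : ι} (hp : ¬ p i) (hq : ¬ q i)
    (hpq : ∀ j ≠ i, p j ↔ ¬ q j) :
    (univ.filter p).card + (univ.filter q).card = Fintype.card ι - 1 := by
  have hp' : (univ.erase i).filter p = univ.filter p := by
    rw [filter_erase, erase_eq_of_notMem (by simpa using hp)]
  have hq' : (univ.erase i).filter (fun j => ¬ p j) = univ.filter q := by
    ext j
    by_cases hj : j = i
    · subst hj; simp [hq]
    · simp [hj, hpq j hj]
  rw [← hp', ← hq', card_filter_add_card_filter_not, card_erase_of_mem (mem_univ i),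
    card_univ]

lemma even_add_iff_even_add_of_add_eq_two {m x y : ℕ} (h : x + y = 2) :
    Even (m + x) ↔ Even (m + y) := by
  have hxy : Even x ↔ Even y := by
    rw [← Nat.even_add, h]; exact even_two
  rw [Nat.even_add, Nat.even_add, hxy]

/-- A third Reidemeister move replaces three chords `a 0, a 1, a 2` of a chord
diagram by chords `a' 0, a' 1, a' 2`, preserving the linking of each of the
three chords with every other chord and toggling the pairwise linkings among
the triple.  Then each `a i` is even before the move iff `a' i` is even after
the move, and the parity of every other chord is also unchanged. -/
theorem stmt_4 (D0 : Finset (ℕ × ℕ)) (a a' : Fin 3 → ℕ × ℕ)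
    (hinj : Function.Injective a) (hinj' : Function.Injective a')
    (hnot : ∀ i, a i ∉ D0) (hnot' : ∀ i, a' i ∉ D0)
    (hext : ∀ c ∈ D0, ∀ i, (Linked c (a i) ↔ Linked c (a' i)))
    (htog : ∀ i j, i ≠ j → (Linked (a i) (a j) ↔ ¬ Linked (a' i) (a' j))) :
    (∀ i, (Even (((D0 ∪ Finset.univ.image a).filter fun d => Linked (a i) d).card) ↔
           Even (((D0 ∪ Finset.univ.image a').filter fun d => Linked (a' i) d).card))) ∧
    (∀ c ∈ D0,
      (Even (((D0 ∪ Finset.univ.image a).filter fun d => Linked c d).card) ↔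
       Even (((D0 ∪ Finset.univ.image a').filter fun d => Linked c d).card))) := by
  refine ⟨fun i => ?_, fun c hc => ?_⟩ <;>
    rw [card_filter_union_image D0 hinj hnot, card_filter_union_image D0 hinj' hnot']
  · have hD0 : D0.filter (fun d => Linked (a i) d) = D0.filter (fun d => Linked (a' i) d) :=
      filter_congr fun d hd => by rw [linked_comm, hext d hd i, linked_comm]
    have htriple := card_filter_add_card_filter_of_forall_ne_iff_not
      (p := fun j => Linked (a i) (a j)) (q := fun j => Linked (a' i) (a' j))
      (linked_irrefl _) (linked_irrefl _) fun j hj => htog i j hj.symm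
    rw [hD0]
    exact even_add_iff_even_add_of_add_eq_two htriple
  · have htriple : univ.filter (fun j => Linked c (a j)) = univ.filter (fun j => Linked c (a' j)) :=
      filter_congr fun j _ => hext c hc j
    rw [htriple]
end

section
/- If a chord diagram D' is obtained from D by a second Reidemeister move (adding two parallel chords c1={p,q}, c2={p+1,q+1} with every old chord linked with c1 iff linked with c2 and c1 not linked with c2), then the second Reidemeister move is a special case of an elementary cobordism: there is an even symmetric configuration on D' consisting of two arcs, whose deletion gives D. -/
/-- `x` lies in (the set of points of) the configuration `C`, a finite set of
arcs of the circle, each arc recorded as the interval of points `[A.1, A.2]`. -/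
def InConfig (C : Finset (ℕ × ℕ)) (x : ℕ) : Prop :=
  ∃ A ∈ C, A.1 ≤ x ∧ x ≤ A.2

instance (C : Finset (ℕ × ℕ)) : DecidablePred (InConfig C) := fun x => by
  unfold InConfig; infer_instance

/-- The reflection involution of the configuration `C`: reflects each arc of
`C` along its radius and fixes all points outside the arcs. -/
noncomputable def reflectPt (C : Finset (ℕ × ℕ)) (x : ℕ) : ℕ :=
  ((C.toList.find? fun A => A.1 ≤ x && x ≤ A.2).map fun A => A.1 + A.2 - x).getD x

/-- Rewrite a pair of points as a chord (smaller endpoint first). -/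
def sortPair (p : ℕ × ℕ) : ℕ × ℕ := (min p.1 p.2, max p.1 p.2)

/-- The image of a chord under the reflection involution of the configuration. -/
noncomputable def reflectChord (C : Finset (ℕ × ℕ)) (c : ℕ × ℕ) : ℕ × ℕ :=
  sortPair (reflectPt C c.1, reflectPt C c.2)

/-- An even symmetric configuration `C` on the chord diagram `D` (on `N`
points): a finite family of pairwise disjoint arcs of the circle such that
each arc contains an even number of chord endpoints, every chord with one
endpoint in the arcs has both endpoints in the arcs, and the reflection
involution `i` of the arcs maps the chord diagram to itself, `i(D) = D`. -/
structure EvenSymConfig (N : ℕ) (D : Finset (ℕ × ℕ)) (C : Finset (ℕ × ℕ)) : Prop where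
  arcs : ∀ A ∈ C, A.1 ≤ A.2 ∧ A.2 < N
  disj : ∀ A ∈ C, ∀ B ∈ C, A ≠ B → A.2 < B.1 ∨ B.2 < A.1
  even : ∀ A ∈ C,
    Even (((D.biUnion fun c => ({c.1, c.2} : Finset ℕ)).filter
      fun x => A.1 ≤ x ∧ x ≤ A.2).card)
  closed : ∀ c ∈ D, (InConfig C c.1 ↔ InConfig C c.2)
  symm : ∀ c ∈ D, reflectChord C c ∈ D


namespace IsChordDiagram

variable {N : ℕ} {D : Finset (ℕ × ℕ)}

theorem eq_of_endpoint (hD : IsChordDiagram N D) {c d : ℕ × ℕ} {x : ℕ}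
    (hc : c ∈ D) (hd : d ∈ D) (hcx : c.1 = x ∨ c.2 = x) (hdx : d.1 = x ∨ d.2 = x) :
    c = d := by
  have hx : x < N := by have := hD.lt c hc; omega
  exact (hD.matching x hx).unique ⟨hc, hcx⟩ ⟨hd, hdx⟩

theorem biUnion_endpoints (hD : IsChordDiagram N D) :
    (D.biUnion fun c => ({c.1, c.2} : Finset ℕ)) = Finset.range N := by
  ext x
  simp only [Finset.mem_biUnion, Finset.mem_insert, Finset.mem_singleton, Finset.mem_range]
  constructor
  · rintro ⟨c, hc, rfl | rfl⟩ <;> have := hD.lt c hc <;> omega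
  · intro hx
    obtain ⟨c, ⟨hc, hcx⟩, -⟩ := hD.matching x hx
    exact ⟨c, hc, hcx.imp Eq.symm Eq.symm⟩

theorem card_endpoints_Icc (hD : IsChordDiagram N D) {a b : ℕ} (hb : b < N) :
    ((D.biUnion fun c => ({c.1, c.2} : Finset ℕ)).filter fun x => a ≤ x ∧ x ≤ b).card =
      b + 1 - a := by
  rw [hD.biUnion_endpoints, ← Nat.card_Icc]
  congr 1
  ext x
  simp only [Finset.mem_filter, Finset.mem_range, Finset.mem_Icc]
  omega

end IsChordDiagram

section Reflection

variable {C : Finset (ℕ × ℕ)} {x : ℕ}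

theorem reflectPt_of_not_inConfig (hx : ¬ InConfig C x) : reflectPt C x = x := by
  unfold reflectPt
  rw [List.find?_eq_none.mpr]
  · rfl
  · intro A hA hpred
    simp only [Bool.and_eq_true, decide_eq_true_eq] at hpred
    exact hx ⟨A, Finset.mem_toList.mp hA, hpred⟩

theorem reflectPt_of_mem
    (hdisj : ∀ A ∈ C, ∀ B ∈ C, A ≠ B → A.2 < B.1 ∨ B.2 < A.1)
    {A : ℕ × ℕ} (hA : A ∈ C) (hxA : A.1 ≤ x ∧ x ≤ A.2) :
    reflectPt C x = A.1 + A.2 - x := by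
  unfold reflectPt
  cases hfind : C.toList.find? (fun B => B.1 ≤ x && x ≤ B.2) with
  | none =>
    have := List.find?_eq_none.mp hfind A (Finset.mem_toList.mpr hA)
    simp only [Bool.and_eq_true, decide_eq_true_eq] at this
    exact absurd hxA this
  | some B =>
    have hB : B ∈ C := Finset.mem_toList.mp (List.mem_of_find?_eq_some hfind)
    have hxB := List.find?_some hfind
    simp only [Bool.and_eq_true, decide_eq_true_eq] at hxB
    obtain rfl : B = A := by
      by_contra hne
      have := hdisj B hB A hA hne
      omega
    rfl

theorem reflectChord_of_not_inConfig {c : ℕ × ℕ} (hc : c.1 ≤ c.2)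
    (h₁ : ¬ InConfig C c.1) (h₂ : ¬ InConfig C c.2) : reflectChord C c = c := by
  simp only [reflectChord, sortPair, reflectPt_of_not_inConfig h₁,
    reflectPt_of_not_inConfig h₂, min_eq_left hc, max_eq_right hc]

end Reflection

section TwoArcs

def twoArcs (p q : ℕ) : Finset (ℕ × ℕ) := {(p, p + 1), (q, q + 1)}

variable {p q : ℕ}

theorem inConfig_twoArcs_iff {x : ℕ} :
    InConfig (twoArcs p q) x ↔ x = p ∨ x = p + 1 ∨ x = q ∨ x = q + 1 := by
  simp only [InConfig, twoArcs, Finset.mem_insert, Finset.mem_singleton, exists_eq_or_imp,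
    exists_eq_left]
  omega

theorem twoArcs_disjoint (hpq : p + 1 < q) :
    ∀ A ∈ twoArcs p q, ∀ B ∈ twoArcs p q, A ≠ B → A.2 < B.1 ∨ B.2 < A.1 := by
  simp only [twoArcs, Finset.mem_insert, Finset.mem_singleton]
  rintro A (rfl | rfl) B (rfl | rfl) hAB <;> first | exact absurd rfl hAB | omega

theorem reflectChord_twoArcs_left (hpq : p + 1 < q) :
    reflectChord (twoArcs p q) (p, q + 1) = (p + 1, q) := by
  have hmem : (p, p + 1) ∈ twoArcs p q ∧ (q, q + 1) ∈ twoArcs p q := by simp [twoArcs]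
  simp only [reflectChord, sortPair,
    reflectPt_of_mem (twoArcs_disjoint hpq) hmem.1 (x := p) (by omega),
    reflectPt_of_mem (twoArcs_disjoint hpq) hmem.2 (x := q + 1) (by omega), Prod.mk.injEq]
  omega

theorem reflectChord_twoArcs_right (hpq : p + 1 < q) :
    reflectChord (twoArcs p q) (p + 1, q) = (p, q + 1) := by
  have hmem : (p, p + 1) ∈ twoArcs p q ∧ (q, q + 1) ∈ twoArcs p q := by simp [twoArcs]
  simp only [reflectChord, sortPair,
    reflectPt_of_mem (twoArcs_disjoint hpq) hmem.1 (x := p + 1) (by omega),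
    reflectPt_of_mem (twoArcs_disjoint hpq) hmem.2 (x := q) (by omega), Prod.mk.injEq]
  omega

end TwoArcs

section ReidemeisterTwo

variable {N p q : ℕ} {D : Finset (ℕ × ℕ)}

theorem IsChordDiagram.eq_or_eq_of_inConfig_twoArcs (hD : IsChordDiagram N D)
    (hc1 : (p, q + 1) ∈ D) (hc2 : (p + 1, q) ∈ D) {c : ℕ × ℕ} (hc : c ∈ D)
    (h : InConfig (twoArcs p q) c.1 ∨ InConfig (twoArcs p q) c.2) :
    c = (p, q + 1) ∨ c = (p + 1, q) := by
  obtain ⟨x, hcx, hx⟩ :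
      ∃ x, (c.1 = x ∨ c.2 = x) ∧ (x = p ∨ x = p + 1 ∨ x = q ∨ x = q + 1) := by
    rcases h with h | h
    exacts [⟨_, .inl rfl, inConfig_twoArcs_iff.mp h⟩, ⟨_, .inr rfl, inConfig_twoArcs_iff.mp h⟩]
  rcases hx with rfl | rfl | rfl | rfl
  · exact .inl (hD.eq_of_endpoint hc hc1 hcx (.inl rfl))
  · exact .inr (hD.eq_of_endpoint hc hc2 hcx (.inl rfl))
  · exact .inr (hD.eq_of_endpoint hc hc2 hcx (.inr rfl))
  · exact .inl (hD.eq_of_endpoint hc hc1 hcx (.inr rfl))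

theorem IsChordDiagram.evenSymConfig_twoArcs (hD : IsChordDiagram N D) (hpq : p + 1 < q)
    (hc1 : (p, q + 1) ∈ D) (hc2 : (p + 1, q) ∈ D) : EvenSymConfig N D (twoArcs p q) := by
  have hN : q + 1 < N := (hD.lt _ hc1).2
  have hArcs : ∀ A ∈ twoArcs p q, A.2 = A.1 + 1 ∧ A.2 < N := by
    simp only [twoArcs, Finset.mem_insert, Finset.mem_singleton]
    rintro A (rfl | rfl) <;> constructor <;> dsimp only <;> omega
  refine ⟨fun A hA => ?_, twoArcs_disjoint hpq, fun A hA => ?_, fun c hc => ?_, fun c hc => ?_⟩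
  · have := hArcs A hA
    omega
  · obtain ⟨hA₂, hAN⟩ := hArcs A hA
    rw [hD.card_endpoints_Icc hAN, hA₂, show A.1 + 1 + 1 - A.1 = 2 by omega]
    exact even_two
  · by_cases h : InConfig (twoArcs p q) c.1 ∨ InConfig (twoArcs p q) c.2
    · rcases hD.eq_or_eq_of_inConfig_twoArcs hc1 hc2 hc h with rfl | rfl <;>
        simp [inConfig_twoArcs_iff]
    · exact iff_of_false (not_or.mp h).1 (not_or.mp h).2
  · by_cases h : InConfig (twoArcs p q) c.1 ∨ InConfig (twoArcs p q) c.2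
    · rcases hD.eq_or_eq_of_inConfig_twoArcs hc1 hc2 hc h with rfl | rfl
      · rwa [reflectChord_twoArcs_left hpq]
      · rwa [reflectChord_twoArcs_right hpq]
    · rwa [reflectChord_of_not_inConfig (hD.lt c hc).1.le (not_or.mp h).1 (not_or.mp h).2]

theorem IsChordDiagram.filter_not_inConfig_twoArcs (hD : IsChordDiagram N D)
    (hc1 : (p, q + 1) ∈ D) (hc2 : (p + 1, q) ∈ D) :
    (D.filter fun c => ¬ InConfig (twoArcs p q) c.1) = (D.erase (p, q + 1)).erase (p + 1, q) := by
  ext c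
  simp only [Finset.mem_filter, Finset.mem_erase]
  constructor
  · rintro ⟨hc, hout⟩
    refine ⟨?_, ?_, hc⟩ <;> rintro rfl <;> exact hout (inConfig_twoArcs_iff.mpr (by simp))
  · rintro ⟨hne2, hne1, hc⟩
    refine ⟨hc, fun hin => ?_⟩
    rcases hD.eq_or_eq_of_inConfig_twoArcs hc1 hc2 hc (.inl hin) with rfl | rfl
    exacts [hne1 rfl, hne2 rfl]

end ReidemeisterTwo

/-- A second Reidemeister move, adding two parallel (unlinked) chords
`c1 = {p, q+1}` and `c2 = {p+1, q}` — so that every old chord is linked with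
`c1` iff it is linked with `c2` — is a special case of an elementary
cobordism: there is an even symmetric configuration on the bigger diagram `D'`
consisting of the two arcs `[p, p+1]` and `[q, q+1]`, whose deletion gives the
smaller diagram `D`. -/
theorem stmt_7 (N p q : ℕ) (D D' : Finset (ℕ × ℕ)) (hpq : p + 1 < q)
    (hD' : IsChordDiagram N D')
    (hc1 : (p, q + 1) ∈ D') (hc2 : (p + 1, q) ∈ D')
    (hD : D = (D'.erase (p, q + 1)).erase (p + 1, q)) :
    ∃ C : Finset (ℕ × ℕ), C = ({(p, p + 1), (q, q + 1)} : Finset (ℕ × ℕ)) ∧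
      EvenSymConfig N D' C ∧ (D'.filter fun c => ¬ InConfig C c.1) = D :=
  ⟨twoArcs p q, rfl, hD'.evenSymConfig_twoArcs hpq hc1 hc2,
    hD ▸ hD'.filter_not_inConfig_twoArcs hc1 hc2⟩
end

section
/- Deleting all chords of an even symmetric configuration from a chord diagram preserves the parity (evenness/oddness) of every remaining chord: a chord γ of D with no endpoint in the configuration is even in D if and only if it is even in the diagram D' obtained by the elementary cobordism. -/
/-!
Both endpoints of `γ` lie outside the arcs of the configuration, so each arc lies entirely
inside or entirely outside the open interval between them; as each arc carries an even number
of chord endpoints, evenly many configuration endpoints lie strictly between the endpoints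
of `γ`. A deleted chord contributes an odd number of these exactly when it is linked with `γ`,
so evenly many deleted chords are linked with `γ`.
-/

open Finset

lemma IsChordDiagram.disjoint_endpoints {N : ℕ} {D : Finset (ℕ × ℕ)}
    (hD : IsChordDiagram N D) {c d : ℕ × ℕ} (hc : c ∈ D) (hd : d ∈ D) (hne : c ≠ d) :
    Disjoint ({c.1, c.2} : Finset ℕ) {d.1, d.2} := by
  rw [disjoint_left]
  intro x hxc hxd
  simp only [mem_insert, mem_singleton] at hxc hxd
  have hxN : x < N := by have := hD.lt c hc; omega
  exact hne ((hD.matching x hxN).unique ⟨hc, by omega⟩ ⟨hd, by omega⟩)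

lemma odd_card_endpoints_between_iff_linked {γ c : ℕ × ℕ} (hc : c.1 < c.2)
    (hdisj : Disjoint ({γ.1, γ.2} : Finset ℕ) {c.1, c.2}) :
    Odd (({c.1, c.2} : Finset ℕ).filter fun x => γ.1 < x ∧ x < γ.2).card ↔ Linked γ c := by
  simp only [disjoint_insert_left, disjoint_insert_right, disjoint_singleton, mem_insert,
    mem_singleton, not_or] at hdisj
  rw [card_filter, sum_pair hc.ne, Nat.odd_iff, Linked]
  grind

lemma even_card_biUnion_iff {ι : Type*} {s : Finset ι} {f : ι → Finset ℕ}
    (hf : (s : Set ι).PairwiseDisjoint f) {p : ι → Prop} [DecidablePred p]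
    (hp : ∀ i ∈ s, Odd (f i).card ↔ p i) :
    Even (s.biUnion f).card ↔ Even (s.filter p).card := by
  rw [card_biUnion hf, even_sum_iff_even_card_odd, filter_congr hp]

lemma even_card_filter_iff_of_even {α : Type*} {s : Finset α} {p : α → Prop} [DecidablePred p]
    (hp : Even (s.filter p).card) :
    Even s.card ↔ Even (s.filter fun a => ¬ p a).card := by
  rw [← card_filter_add_card_filter_not (s := s) p, Nat.even_add]
  exact iff_true_left hp

lemma even_card_inConfig_between {C : Finset (ℕ × ℕ)} {E : Finset ℕ}
    (hdisj : ∀ A ∈ C, ∀ B ∈ C, A ≠ B → A.2 < B.1 ∨ B.2 < A.1)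
    (heven : ∀ A ∈ C, Even (E.filter fun x => A.1 ≤ x ∧ x ≤ A.2).card)
    {a b : ℕ} (ha : ¬ InConfig C a) (hb : ¬ InConfig C b) :
    Even (E.filter fun x => InConfig C x ∧ a < x ∧ x < b).card := by
  have hunion : E.filter (fun x => InConfig C x ∧ a < x ∧ x < b) =
      C.biUnion fun A => E.filter fun x => (A.1 ≤ x ∧ x ≤ A.2) ∧ a < x ∧ x < b := by
    ext x
    rw [mem_filter]
    simp only [mem_filter, mem_biUnion, InConfig]
    tauto
  have hpairwise : (C : Set (ℕ × ℕ)).PairwiseDisjoint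
      fun A => E.filter fun x => (A.1 ≤ x ∧ x ≤ A.2) ∧ a < x ∧ x < b := by
    intro A hA B hB hAB
    have := hdisj A hA B hB hAB
    rw [Function.onFun, disjoint_left]
    intro x hxA hxB
    simp only [mem_filter] at hxA hxB
    omega
  rw [hunion, card_biUnion hpairwise]
  refine even_sum _ fun A hA => ?_
  have haA : ¬ (A.1 ≤ a ∧ a ≤ A.2) := fun h => ha ⟨A, hA, h⟩
  have hbA : ¬ (A.1 ≤ b ∧ b ≤ A.2) := fun h => hb ⟨A, hA, h⟩
  by_cases hinside : a < A.1 ∧ A.1 < b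
  · have hwithin : ∀ x, (A.1 ≤ x ∧ x ≤ A.2) ∧ a < x ∧ x < b ↔ A.1 ≤ x ∧ x ≤ A.2 := by
      omega
    rw [filter_congr fun x _ => hwithin x]
    exact heven A hA
  · rw [filter_false_of_mem fun x _ => by omega]
    exact .zero

lemma EvenSymConfig.even_card_linked_inConfig {N : ℕ} {D C : Finset (ℕ × ℕ)}
    (hD : IsChordDiagram N D) (h : EvenSymConfig N D C) {γ : ℕ × ℕ} (hγ : γ ∈ D)
    (hout : ¬ InConfig C γ.1) :
    Even (((D.filter fun c => InConfig C c.1).filter fun d => Linked γ d).card) := by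
  have hout₂ : ¬ InConfig C γ.2 := fun h₂ => hout ((h.closed γ hγ).2 h₂)
  have hendpoints : (D.filter fun c => InConfig C c.1).biUnion
        (fun c => ({c.1, c.2} : Finset ℕ).filter fun x => γ.1 < x ∧ x < γ.2) =
      (D.biUnion fun c => ({c.1, c.2} : Finset ℕ)).filter
        fun x => InConfig C x ∧ γ.1 < x ∧ x < γ.2 := by
    ext x
    simp only [mem_biUnion, mem_filter, mem_insert, mem_singleton]
    constructor
    · rintro ⟨c, ⟨hc, hcC⟩, rfl | rfl, hx⟩
      exacts [⟨⟨c, hc, by simp⟩, hcC, hx⟩,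
        ⟨⟨c, hc, by simp⟩, (h.closed c hc).1 hcC, hx⟩]
    · rintro ⟨⟨c, hc, rfl | rfl⟩, hxC, hx⟩
      exacts [⟨c, ⟨hc, hxC⟩, by simp, hx⟩,
        ⟨c, ⟨hc, (h.closed c hc).2 hxC⟩, by simp, hx⟩]
  rw [← even_card_biUnion_iff (f := fun c => ({c.1, c.2} : Finset ℕ).filter
    fun x => γ.1 < x ∧ x < γ.2), hendpoints]
  · exact even_card_inConfig_between h.disj h.even hout hout₂
  · intro c hc d hd hne
    exact disjoint_filter_filter (hD.disjoint_endpoints (mem_filter.1 hc).1 (mem_filter.1 hd).1 hne)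
  · intro c hc
    obtain ⟨hcD, hcC⟩ := mem_filter.1 hc
    have hne : γ ≠ c := by rintro rfl; exact hout hcC
    exact odd_card_endpoints_between_iff_linked (hD.lt c hcD).1 (hD.disjoint_endpoints hγ hcD hne)

/-- Deleting all chords of an even symmetric configuration from a chord diagram
(an elementary cobordism) preserves the parity of every remaining chord: a
chord `γ` of `D` with no endpoint in the configuration is even in `D` iff it is
even in the resulting diagram.  Equivalently, the number of deleted chords
linked with `γ` is even. -/
theorem stmt_11 (N : ℕ) (D C : Finset (ℕ × ℕ)) (hD : IsChordDiagram N D)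
    (h : EvenSymConfig N D C) (γ : ℕ × ℕ) (hγ : γ ∈ D) (hout : ¬ InConfig C γ.1) :
    (Even ((D.filter fun d => Linked γ d).card) ↔
     Even (((D.filter fun c => ¬ InConfig C c.1).filter fun d => Linked γ d).card)) ∧
    Even (((D.filter fun c => InConfig C c.1).filter fun d => Linked γ d).card) := by
  have hdeleted := h.even_card_linked_inConfig hD hγ hout
  refine ⟨?_, hdeleted⟩
  rw [filter_comm] at hdeleted ⊢
  exact even_card_filter_iff_of_even hdeleted
end

section
/- The graph-valued invariant Γ of a framed 4-valent graph L — vertices = unicursal components, an edge between two vertices iff the corresponding components share an odd number of intersection points (vertices of L) — is invariant under second and third Reidemeister moves applied to L. -/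
/-- The graph `Γ(L)` of a framed 4-valent graph `L`, encoded as a Gauss diagram
on `k` circles: points of the circles are natural numbers, `circleOf` assigns
each point to its circle (unicursal component), and `D` is the set of chords
(each chord an unordered pair of points, recorded as an ordered pair).  The
vertices of `Γ` are the `k` components, and two distinct components are
adjacent iff they share an odd number of chords (intersection points). -/
def gammaGraph (k : ℕ) (circleOf : ℕ → Fin k) (D : Finset (ℕ × ℕ)) :
    SimpleGraph (Fin k) where
  Adj i j := i ≠ j ∧ Odd ((D.filter fun c =>
      (circleOf c.1 = i ∧ circleOf c.2 = j) ∨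
      (circleOf c.1 = j ∧ circleOf c.2 = i)).card)
  symm := by
    constructor
    intro i j hij
    refine ⟨hij.1.symm, ?_⟩
    have heq : (D.filter fun c =>
        (circleOf c.1 = i ∧ circleOf c.2 = j) ∨
        (circleOf c.1 = j ∧ circleOf c.2 = i)) =
      (D.filter fun c =>
        (circleOf c.1 = j ∧ circleOf c.2 = i) ∨
        (circleOf c.1 = i ∧ circleOf c.2 = j)) := by
      apply Finset.filter_congr
      intro c _
      tauto
    rw [← heq]
    exact hij.2
  loopless := ⟨fun i hi => hi.1 rfl⟩

/-!
`Γ(L)` only sees, for each unordered pair of circles, the parity of the number of chords joining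
them, i.e. the multiset `chordEnds` of circle pairs reduced mod 2. An R2 move adds one pair twice to
this multiset, and an R3 move replaces chords by chords with the same ends, leaving it unchanged.
-/

theorem Sym2.toFinset_injective {α : Type*} [DecidableEq α] :
    Function.Injective (Sym2.toFinset : Sym2 α → Finset α) := fun z z' h =>
  Sym2.ext fun x => by rw [← Sym2.mem_toFinset, h, Sym2.mem_toFinset]

def chordEnds {α V : Type*} (circleOf : α → V) (D : Finset (α × α)) : Multiset (Sym2 V) :=
  D.val.map fun c => s(circleOf c.1, circleOf c.2)

section chordEnds

variable {α V : Type*} (circleOf : α → V)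

theorem chordEnds_insert {D : Finset (α × α)} {c : α × α} [DecidableEq α] (hc : c ∉ D) :
    chordEnds circleOf (insert c D) = s(circleOf c.1, circleOf c.2) ::ₘ chordEnds circleOf D := by
  rw [chordEnds, Finset.insert_val_of_notMem hc, Multiset.map_cons]
  rfl

theorem chordEnds_union_of_disjoint [DecidableEq α] {D D' : Finset (α × α)}
    (h : Disjoint D D') :
    chordEnds circleOf (D ∪ D') = chordEnds circleOf D + chordEnds circleOf D' := by
  rw [chordEnds, ← Finset.disjUnion_eq_union _ _ h, Finset.disjUnion_val, Multiset.map_add]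
  rfl

theorem chordEnds_image [DecidableEq α] {ι : Type*} {s : Finset ι} {a : ι → α × α}
    (ha : Set.InjOn a s) :
    chordEnds circleOf (s.image a) = s.val.map fun l => s(circleOf (a l).1, circleOf (a l).2) := by
  rw [chordEnds, Finset.image_val_of_injOn ha, Multiset.map_map]
  rfl

theorem chordEnds_union_image [DecidableEq α] {ι : Type*} [Fintype ι] {D₀ : Finset (α × α)}
    {a : ι → α × α} (ha : Function.Injective a) (hD₀ : ∀ l, a l ∉ D₀) :
    chordEnds circleOf (D₀ ∪ Finset.univ.image a) = chordEnds circleOf D₀ +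
      Finset.univ.val.map fun l => s(circleOf (a l).1, circleOf (a l).2) := by
  rw [chordEnds_union_of_disjoint, chordEnds_image circleOf ha.injOn]
  refine Finset.disjoint_left.2 fun c hc hc' => ?_
  obtain ⟨l, -, rfl⟩ := Finset.mem_image.1 hc'
  exact hD₀ l hc

end chordEnds

section gammaGraph

variable {k : ℕ} (circleOf : ℕ → Fin k)

theorem card_filter_chord_eq_count (D : Finset (ℕ × ℕ)) (i j : Fin k) :
    (D.filter fun c => (circleOf c.1 = i ∧ circleOf c.2 = j) ∨
        (circleOf c.1 = j ∧ circleOf c.2 = i)).card =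
      (chordEnds circleOf D).count s(i, j) := by
  rw [chordEnds, Multiset.count_map, Finset.card_def, Finset.filter_val]
  congr 1
  refine Multiset.filter_congr fun c _ => ?_
  rw [Sym2.eq_iff]
  tauto

theorem gammaGraph_adj_iff (D : Finset (ℕ × ℕ)) (i j : Fin k) :
    (gammaGraph k circleOf D).Adj i j ↔ i ≠ j ∧ Odd ((chordEnds circleOf D).count s(i, j)) := by
  rw [← card_filter_chord_eq_count]
  rfl

theorem gammaGraph_eq_of_count_mod_two {D D' : Finset (ℕ × ℕ)}
    (h : ∀ z, (chordEnds circleOf D).count z % 2 = (chordEnds circleOf D').count z % 2) :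
    gammaGraph k circleOf D = gammaGraph k circleOf D' := by
  ext i j
  simp only [gammaGraph_adj_iff, Nat.odd_iff, h]

theorem gammaGraph_eq_of_chordEnds_eq {D D' : Finset (ℕ × ℕ)}
    (h : chordEnds circleOf D = chordEnds circleOf D') :
    gammaGraph k circleOf D = gammaGraph k circleOf D' :=
  gammaGraph_eq_of_count_mod_two circleOf fun z => by rw [h]

theorem gammaGraph_insert_insert {D : Finset (ℕ × ℕ)} {c₁ c₂ : ℕ × ℕ}
    (h₁ : c₁ ∉ insert c₂ D) (h₂ : c₂ ∉ D)
    (hends : s(circleOf c₁.1, circleOf c₁.2) = s(circleOf c₂.1, circleOf c₂.2)) :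
    gammaGraph k circleOf (insert c₁ (insert c₂ D)) = gammaGraph k circleOf D := by
  refine gammaGraph_eq_of_count_mod_two circleOf fun z => ?_
  rw [chordEnds_insert circleOf h₁, chordEnds_insert circleOf h₂, Multiset.count_cons,
    Multiset.count_cons, hends]
  split_ifs <;> omega

end gammaGraph

/-- The graph `Γ(L)` is invariant under second and third Reidemeister moves:
(a) an R2 move adds/removes two chords joining the same pair of circles, so it
changes each pairwise intersection count by 0 or 2 and does not change `Γ`;
(b) an R3 move replaces three chords by three chords joining the same circles,
so it does not change `Γ`. -/
theorem stmt_15 (k : ℕ) (circleOf : ℕ → Fin k) :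
    (∀ (D : Finset (ℕ × ℕ)) (c1 c2 : ℕ × ℕ), c1 ∉ D → c2 ∉ D → c1 ≠ c2 →
      ({circleOf c1.1, circleOf c1.2} : Finset (Fin k)) =
        ({circleOf c2.1, circleOf c2.2} : Finset (Fin k)) →
      gammaGraph k circleOf (insert c1 (insert c2 D)) = gammaGraph k circleOf D) ∧
    (∀ (D0 : Finset (ℕ × ℕ)) (a a' : Fin 3 → ℕ × ℕ),
      Function.Injective a → Function.Injective a' →
      (∀ l, a l ∉ D0) → (∀ l, a' l ∉ D0) →
      (∀ l, circleOf (a l).1 = circleOf (a' l).1 ∧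
            circleOf (a l).2 = circleOf (a' l).2) →
      gammaGraph k circleOf (D0 ∪ Finset.univ.image a) =
        gammaGraph k circleOf (D0 ∪ Finset.univ.image a')) := by
  constructor
  · intro D c1 c2 h1 h2 h12 hpair
    rw [← Sym2.toFinset_mk_eq, ← Sym2.toFinset_mk_eq] at hpair
    exact gammaGraph_insert_insert circleOf (by simp [h12, h1]) h2
      (Sym2.toFinset_injective hpair)
  · intro D0 a a' ha ha' hd hd' hcirc
    refine gammaGraph_eq_of_chordEnds_eq circleOf ?_
    rw [chordEnds_union_image circleOf ha hd, chordEnds_union_image circleOf ha' hd']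
    simp only [(hcirc _).1, (hcirc _).2]
end

section
/- Let D and D' be chord diagrams with a bijection φ between their chords that preserves linking (i.e., φ induces an isomorphism of intersection graphs). Then for any subset S of chords of D, smoothing all chords of S in D and all chords of φ(S) in D' yields 1-manifolds with the same number of circle components. -/
/-- Number of cycles (orbits) of a permutation of a finite type, counting fixed
points as (trivial) cycles: this is the number of circle components of the
curve encoded by the permutation. -/
def numCycles {α : Type*} [Fintype α] [DecidableEq α] (π : Equiv.Perm α) : ℕ :=
  π.cycleType.card + (Finset.univ.filter fun x => π x = x).card

/-- The chords of a perfect matching `m` (a fixed-point-free involution of the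
`N` points of the circle), each represented by its smaller endpoint. -/
abbrev ChordIdx (N : ℕ) (m : Equiv.Perm (Fin N)) := {x : Fin N // (x : ℕ) < ((m x : Fin N) : ℕ)}

/-- Two chords of the matching `m` are linked iff their endpoint pairs
interleave on the circle. -/
def LinkedChord (N : ℕ) (m : Equiv.Perm (Fin N)) (i j : ChordIdx N m) : Prop :=
  Linked (((i : Fin N) : ℕ), ((m (i : Fin N) : Fin N) : ℕ))
         (((j : Fin N) : ℕ), ((m (j : Fin N) : Fin N) : ℕ))

instance (N : ℕ) (m : Equiv.Perm (Fin N)) : DecidableRel (LinkedChord N m) :=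
  fun i j => by unfold LinkedChord; infer_instance

/-- The permutation whose orbits are the circle components of the curve
obtained from the chord diagram (with matching `m`) by smoothing exactly the
chords in the set `S`: the cyclic successor composed with the matching
restricted to the endpoints of chords of `S`. -/
def smoothSet (N : ℕ) [NeZero N] (m : Equiv.Perm (Fin N)) (hinv : ∀ x, m (m x) = x)
    (S : Finset (ChordIdx N m)) : Equiv.Perm (Fin N) :=
  Equiv.addLeft 1 * Function.Involutive.toPerm
    (fun x => if ∃ i ∈ S, (i : Fin N) = x ∨ m (i : Fin N) = x then m x else x)
    (by
      intro x
      dsimp only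
      by_cases h : ∃ i ∈ S, (i : Fin N) = x ∨ m (i : Fin N) = x
      · have h2 : ∃ i ∈ S, (i : Fin N) = m x ∨ m (i : Fin N) = m x := by
          obtain ⟨i, hi, hcase⟩ := h
          refine ⟨i, hi, ?_⟩
          rcases hcase with e | e
          · exact Or.inr (by rw [e])
          · exact Or.inl (by rw [← e, hinv])
        rw [if_pos h, if_pos h2, hinv]
      · rw [if_neg h, if_neg h])

/-!
A function `f` on the points of the circle with values in `ZMod 2` is invariant under the
smoothing permutation iff it is constant on its cycles, so there are `2 ^ numCycles` of them.
Such an `f` is constant between consecutive endpoints of smoothed chords, and invariance forces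
it to jump by the same amount `t k` at both endpoints of each smoothed chord `k`; so `f` is
determined by `f 0` and `t`. Summing the jumps, `f (m i) - f i = t i + ∑_{k linked to i} t k`,
since a chord that is nested with or disjoint from `i` has an even number of endpoints between
`i` and `m i`. Invariance at `i` says `f (m i) - f i = t i`, so the admissible `t` form the kernel
of the mod-2 adjacency matrix of the intersection graph restricted to `S`, and
`2 ^ numCycles = 2 * #kernel` depends only on the intersection graph.
-/
open Equiv Equiv.Perm Finset

section CycleCount
variable {α β : Type*}

lemma Equiv.Perm.SameCycle.apply_eq_of_invariant {π : Perm α} {f : α → β}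
    (hf : ∀ x, f (π x) = f x) {x y : α} (h : π.SameCycle x y) : f x = f y := by
  obtain ⟨n, rfl⟩ := h
  induction n using Int.induction_on with
  | zero => rfl
  | succ n ih => rw [ih, add_comm, zpow_add, zpow_one, mul_apply, hf]
  | pred n ih =>
    rw [ih, sub_eq_neg_add, zpow_add, zpow_neg_one, mul_apply, ← hf (π⁻¹ _), ← mul_apply,
      mul_inv_cancel, one_apply]

def invariantEquivQuotient (π : Perm α) :
    {f : α → β // ∀ x, f (π x) = f x} ≃ (Quotient (SameCycle.setoid π) → β) where
  toFun f := Quotient.lift f.1 fun _ _ => SameCycle.apply_eq_of_invariant f.2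
  invFun g := ⟨fun x => g ⟦x⟧, fun _ =>
    congrArg g (Quotient.sound (sameCycle_apply_left.2 (SameCycle.refl _ _)))⟩
  left_inv _ := rfl
  right_inv _ := funext fun q => Quotient.inductionOn q fun _ => rfl

variable [Fintype α] [DecidableEq α]

def cycleOrFixed (π : Perm α) (x : α) : {c // c ∈ π.cycleFactorsFinset} ⊕ {x // π x = x} :=
  if h : π x = x then .inr ⟨x, h⟩
  else .inl ⟨π.cycleOf x, cycleOf_mem_cycleFactorsFinset_iff.2 (mem_support.2 h)⟩

lemma cycleOrFixed_eq_iff (π : Perm α) (x y : α) :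
    cycleOrFixed π x = cycleOrFixed π y ↔ π.SameCycle x y := by
  unfold cycleOrFixed
  by_cases hx : π x = x <;> by_cases hy : π y = y <;> simp only [hx, hy, dite_true, dite_false,
    Sum.inl.injEq, Sum.inr.injEq, reduceCtorEq, false_iff, Subtype.mk.injEq]
  · exact ⟨fun h => h ▸ SameCycle.refl _ _, fun h => h.eq_of_left hx⟩
  · exact fun h => hy (h.apply_eq_self_iff.1 hx)
  · exact fun h => hx (h.apply_eq_self_iff.2 hy)
  · exact (sameCycle_iff_cycleOf_eq_of_mem_support (mem_support.2 hx) (mem_support.2 hy)).symm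

lemma cycleOrFixed_surjective (π : Perm α) : Function.Surjective (cycleOrFixed π) := by
  rintro (⟨c, hc⟩ | ⟨x, hx⟩)
  · obtain ⟨x, hx⟩ := (mem_cycleFactorsFinset_iff.1 hc).1.nonempty_support
    refine ⟨x, ?_⟩
    rw [cycleOrFixed, dif_neg (mem_support.1 (mem_cycleFactorsFinset_support_le hc hx))]
    exact congrArg Sum.inl (Subtype.ext (cycle_is_cycleOf hx hc).symm)
  · exact ⟨x, by rw [cycleOrFixed, dif_pos hx]⟩

lemma nat_card_quotient_sameCycle (π : Perm α) :
    Nat.card (Quotient (SameCycle.setoid π)) = numCycles π := by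
  have e : Quotient (SameCycle.setoid π) ≃ _ :=
    (Quotient.congrRight fun x y => (cycleOrFixed_eq_iff π x y).symm).trans
      (Setoid.quotientKerEquivOfSurjective _ (cycleOrFixed_surjective π))
  rw [Nat.card_congr e, Nat.card_sum, Nat.card_eq_fintype_card, Nat.card_eq_fintype_card,
    Fintype.card_coe, Fintype.card_subtype, numCycles, cycleType_def, Multiset.card_map]
  rfl

lemma nat_card_invariant_eq_pow_numCycles (π : Perm α) :
    Nat.card {f : α → β // ∀ x, f (π x) = f x} = Nat.card β ^ numCycles π := by
  rw [Nat.card_congr (invariantEquivQuotient π), Nat.card_fun, nat_card_quotient_sameCycle]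

end CycleCount

section LinkKernel
variable {ι ι' : Type*} [Fintype ι] [Fintype ι']

/-- The kernel, over `ZMod 2`, of the adjacency matrix of the relation `R` restricted to `S`;
vectors are indexed by all of `ι` and vanish off `S`. -/
def linkKernel (R : ι → ι → Prop) [DecidableRel R] (S : Finset ι) : Set (ι → ZMod 2) :=
  {t | (∀ k ∉ S, t k = 0) ∧ ∀ i ∈ S, ∑ k, (if R k i then t k else 0) = 0}

lemma nat_card_linkKernel_congr [DecidableEq ι'] {R : ι → ι → Prop} {R' : ι' → ι' → Prop}
    [DecidableRel R] [DecidableRel R'] (e : ι ≃ ι') (he : ∀ i j, R i j ↔ R' (e i) (e j))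
    (S : Finset ι) : Nat.card (linkKernel R S) = Nat.card (linkKernel R' (S.image e)) := by
  refine (Nat.card_congr ((e.symm.arrowCongr (Equiv.refl (ZMod 2))).subtypeEquiv fun t => ?_)).symm
  have hS : ∀ k, k ∈ S.image e ↔ e.symm k ∈ S := fun k => by
    rw [← e.coe_toEmbedding, ← Finset.map_eq_image, Finset.mem_map_equiv]
  simp only [linkKernel, Set.mem_ofPred_eq, arrowCongr_apply, Function.comp_apply, refl_apply,
    symm_symm, e.forall_congr_left, hS, apply_symm_apply, he, ← e.sum_comp]

end LinkKernel

lemma Fin.induction_add_one {N : ℕ} [NeZero N] {p : Fin N → Prop} (zero : p 0)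
    (succ : ∀ x, p x → p (x + 1)) (x : Fin N) : p x := by
  obtain ⟨n, rfl⟩ := Nat.exists_eq_add_one_of_ne_zero (NeZero.ne N)
  induction x using Fin.induction with
  | zero => exact zero
  | succ i ih => rw [← Fin.coeSucc_eq_succ]; exact succ _ ih

lemma Fin.ite_lt_add_one {N : ℕ} [NeZero N] (a y : Fin N) :
    (if a < y + 1 then 1 else 0 : ZMod 2)
      = (if a < y then 1 else 0) + (if a = y then 1 else 0) + (if y + 1 = 0 then 1 else 0) := by
  obtain ⟨n, rfl⟩ := Nat.exists_eq_add_one_of_ne_zero (NeZero.ne N)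
  simp only [Fin.lt_def, Fin.ext_iff, Fin.val_add_one, Fin.val_zero, Fin.val_last]
  have := a.isLt
  split_ifs <;> first | decide | omega | contradiction

section ChordDiagram
variable {N : ℕ} {m : Perm (Fin N)}

def endsBelow (k : ChordIdx N m) (y : Fin N) : ZMod 2 :=
  (if k.1 < y then 1 else 0) + (if m k.1 < y then 1 else 0)

def endsAt (k : ChordIdx N m) (x : Fin N) : ZMod 2 :=
  (if k.1 = x then 1 else 0) + (if m k.1 = x then 1 else 0)

lemma ChordIdx.ends_ne (hinv : ∀ x, m (m x) = x) {k i : ChordIdx N m} (hki : k ≠ i) :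
    k.1 ≠ i.1 ∧ k.1 ≠ m i.1 ∧ m k.1 ≠ i.1 ∧ m k.1 ≠ m i.1 := by
  have hk : (k.1 : ℕ) < m k.1 := k.2
  have hi : (i.1 : ℕ) < m i.1 := i.2
  refine ⟨fun h => hki (Subtype.ext h), fun h => ?_, fun h => ?_,
    fun h => hki (Subtype.ext (m.injective h))⟩
  · rw [h, hinv] at hk; omega
  · rw [← h, hinv] at hi; omega

lemma endsAt_of_isEnd (hinv : ∀ x, m (m x) = x) (k : ChordIdx N m) {i : ChordIdx N m}
    {x : Fin N} (hx : i.1 = x ∨ m i.1 = x) : endsAt k x = if k = i then 1 else 0 := by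
  by_cases hki : k = i
  · subst hki
    have hne : k.1 ≠ m k.1 := Fin.ne_of_lt k.2
    rcases hx with rfl | rfl <;> simp [endsAt, hne, hne.symm]
  · obtain ⟨h1, h2, h3, h4⟩ := ChordIdx.ends_ne hinv hki
    rcases hx with rfl | rfl <;> simp [endsAt, hki, h1, h2, h3, h4]

lemma endsBelow_add_endsBelow (hinv : ∀ x, m (m x) = x) (k i : ChordIdx N m) :
    endsBelow k (m i.1) + endsBelow k i.1
      = (if k = i then 1 else 0) + (if LinkedChord N m k i then 1 else 0) := by
  have hk : (k.1 : ℕ) < m k.1 := k.2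
  have hi : (i.1 : ℕ) < m i.1 := i.2
  by_cases hki : k = i
  · subst hki
    rw [if_pos rfl, if_neg (by unfold LinkedChord Linked; omega)]
    simp only [endsBelow, Fin.lt_def]
    split_ifs <;> first | decide | omega
  · obtain ⟨h1, h2, h3, h4⟩ := ChordIdx.ends_ne hinv hki
    rw [Ne, Fin.ext_iff] at h1 h2 h3 h4
    rw [if_neg hki, zero_add]
    split_ifs with hL <;> unfold LinkedChord Linked at hL <;> simp only [endsBelow, Fin.lt_def] <;>
      split_ifs <;> first | decide | omega

/-- The function on the points of the circle with value `c` at `0` that jumps by `t k` at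
each endpoint of each chord `k`. -/
def potential (t : ChordIdx N m → ZMod 2) (c : ZMod 2) (y : Fin N) : ZMod 2 :=
  c + ∑ k, t k * endsBelow k y

lemma potential_add_potential (hinv : ∀ x, m (m x) = x) (t : ChordIdx N m → ZMod 2)
    (c : ZMod 2) (i : ChordIdx N m) :
    potential t c (m i.1) + potential t c i.1
      = t i + ∑ k, if LinkedChord N m k i then t k else 0 := by
  have h : potential t c (m i.1) + potential t c i.1
      = (c + c) + ∑ k, t k * (endsBelow k (m i.1) + endsBelow k i.1) := by
    simp only [potential, mul_add, sum_add_distrib]; ring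
  simp only [h, CharTwo.add_self_eq_zero, zero_add, endsBelow_add_endsBelow hinv, mul_add,
    sum_add_distrib, mul_ite, mul_one, mul_zero, sum_ite_eq', mem_univ, if_true]

lemma sum_mul_endsAt_of_isEnd (hinv : ∀ x, m (m x) = x) (t : ChordIdx N m → ZMod 2)
    {i : ChordIdx N m} {x : Fin N} (hx : i.1 = x ∨ m i.1 = x) :
    ∑ k, t k * endsAt k x = t i := by
  simp [endsAt_of_isEnd hinv _ hx]

lemma sum_mul_endsAt_of_not_isEnd {S : Finset (ChordIdx N m)} {t : ChordIdx N m → ZMod 2}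
    (ht : ∀ k ∉ S, t k = 0) {x : Fin N} (hx : ¬ ∃ i ∈ S, i.1 = x ∨ m i.1 = x) :
    ∑ k, t k * endsAt k x = 0 := by
  refine sum_eq_zero fun k _ => ?_
  by_cases hk : k ∈ S
  · simp only [not_exists, not_and, not_or] at hx
    simp [endsAt, (hx k hk).1, (hx k hk).2]
  · simp [ht k hk]

variable [NeZero N]

lemma endsBelow_zero (k : ChordIdx N m) : endsBelow k 0 = 0 := by
  simp [endsBelow]

lemma endsBelow_add_one (k : ChordIdx N m) (y : Fin N) :
    endsBelow k (y + 1) = endsBelow k y + endsAt k y := by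
  simp only [endsBelow, endsAt, Fin.ite_lt_add_one]
  linear_combination CharTwo.add_self_eq_zero (if y + 1 = 0 then (1 : ZMod 2) else 0)

lemma potential_zero (t : ChordIdx N m → ZMod 2) (c : ZMod 2) : potential t c 0 = c := by
  simp [potential, endsBelow_zero]

lemma potential_add_one (t : ChordIdx N m → ZMod 2) (c : ZMod 2) (y : Fin N) :
    potential t c (y + 1) = potential t c y + ∑ k, t k * endsAt k y := by
  simp only [potential, endsBelow_add_one, mul_add, sum_add_distrib, add_assoc]

def chordJumps (S : Finset (ChordIdx N m)) (f : Fin N → ZMod 2) (k : ChordIdx N m) : ZMod 2 :=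
  if k ∈ S then f (k.1 + 1) + f k.1 else 0

lemma chordJumps_potential (hinv : ∀ x, m (m x) = x) {S : Finset (ChordIdx N m)}
    {t : ChordIdx N m → ZMod 2} (ht : ∀ k ∉ S, t k = 0) (c : ZMod 2) :
    chordJumps S (potential t c) = t := by
  funext k
  by_cases hk : k ∈ S
  · rw [chordJumps, if_pos hk, potential_add_one, sum_mul_endsAt_of_isEnd hinv t (.inl rfl)]
    grind
  · rw [chordJumps, if_neg hk, ht k hk]

variable (hinv : ∀ x, m (m x) = x) (S : Finset (ChordIdx N m))

lemma smoothSet_apply_of_not_isEnd {x : Fin N} (hx : ¬ ∃ i ∈ S, i.1 = x ∨ m i.1 = x) :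
    smoothSet N m hinv S x = x + 1 := by
  show 1 + (if ∃ i ∈ S, i.1 = x ∨ m i.1 = x then m x else x) = _
  rw [if_neg hx, add_comm]

lemma smoothSet_apply_of_isEnd {x : Fin N} (hx : ∃ i ∈ S, i.1 = x ∨ m i.1 = x) :
    smoothSet N m hinv S x = m x + 1 := by
  show 1 + (if ∃ i ∈ S, i.1 = x ∨ m i.1 = x then m x else x) = _
  rw [if_pos hx, add_comm]

variable {hinv S}

lemma apply_add_one_of_invariant {f : Fin N → ZMod 2}
    (hf : ∀ x, f (smoothSet N m hinv S x) = f x) (x : Fin N) :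
    f (x + 1) = f x + ∑ k, chordJumps S f k * endsAt k x := by
  by_cases hx : ∃ i ∈ S, i.1 = x ∨ m i.1 = x
  · obtain ⟨i, hi, hix⟩ := hx
    have hfst := hf i.1
    have hsnd := hf (m i.1)
    rw [smoothSet_apply_of_isEnd hinv S ⟨i, hi, .inl rfl⟩] at hfst
    rw [smoothSet_apply_of_isEnd hinv S ⟨i, hi, .inr rfl⟩, hinv] at hsnd
    rw [sum_mul_endsAt_of_isEnd hinv _ hix, chordJumps, if_pos hi]
    rcases hix with rfl | rfl <;> grind
  · rw [sum_mul_endsAt_of_not_isEnd (fun k hk => by simp [chordJumps, hk]) hx, add_zero,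
      ← smoothSet_apply_of_not_isEnd hinv S hx, hf]

lemma eq_potential_of_invariant {f : Fin N → ZMod 2}
    (hf : ∀ x, f (smoothSet N m hinv S x) = f x) : f = potential (chordJumps S f) (f 0) := by
  funext x
  induction x using Fin.induction_add_one with
  | zero => rw [potential_zero]
  | succ x ih => rw [apply_add_one_of_invariant hf, potential_add_one, ih]

lemma chordJumps_mem_linkKernel {f : Fin N → ZMod 2}
    (hf : ∀ x, f (smoothSet N m hinv S x) = f x) :
    chordJumps S f ∈ linkKernel (LinkedChord N m) S := by
  refine ⟨fun k hk => if_neg hk, fun i hi => ?_⟩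
  have hpair := potential_add_potential hinv (chordJumps S f) (f 0) i
  rw [← eq_potential_of_invariant hf] at hpair
  have hsnd := hf (m i.1)
  rw [smoothSet_apply_of_isEnd hinv S ⟨i, hi, .inr rfl⟩, hinv] at hsnd
  rw [chordJumps, if_pos hi] at hpair
  grind

lemma potential_smoothSet {t : ChordIdx N m → ZMod 2} (ht : t ∈ linkKernel (LinkedChord N m) S)
    (c : ZMod 2) (x : Fin N) : potential t c (smoothSet N m hinv S x) = potential t c x := by
  by_cases hx : ∃ i ∈ S, i.1 = x ∨ m i.1 = x
  · obtain ⟨i, hi, hix⟩ := hx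
    have hpair := potential_add_potential hinv t c i
    rw [ht.2 i hi, add_zero] at hpair
    rw [smoothSet_apply_of_isEnd hinv S ⟨i, hi, hix⟩, potential_add_one,
      sum_mul_endsAt_of_isEnd hinv t (i := i) (by rcases hix with rfl | rfl <;> simp [hinv])]
    rcases hix with rfl | rfl
    · grind
    · rw [hinv]; grind
  · rw [smoothSet_apply_of_not_isEnd hinv S hx, potential_add_one,
      sum_mul_endsAt_of_not_isEnd ht.1 hx, add_zero]

variable (hinv S)

def invariantEquivLinkKernel :
    {f : Fin N → ZMod 2 // ∀ x, f (smoothSet N m hinv S x) = f x}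
      ≃ ZMod 2 × linkKernel (LinkedChord N m) S where
  toFun f := (f.1 0, ⟨chordJumps S f.1, chordJumps_mem_linkKernel f.2⟩)
  invFun ct := ⟨potential ct.2.1 ct.1, potential_smoothSet ct.2.2 ct.1⟩
  left_inv f := Subtype.ext (eq_potential_of_invariant f.2).symm
  right_inv ct := Prod.ext (potential_zero _ _) (Subtype.ext (chordJumps_potential hinv ct.2.2.1 _))

lemma two_pow_numCycles_smoothSet :
    2 ^ numCycles (smoothSet N m hinv S) = 2 * Nat.card (linkKernel (LinkedChord N m) S) :=
  calc 2 ^ numCycles (smoothSet N m hinv S)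
      = Nat.card {f : Fin N → ZMod 2 // ∀ x, f (smoothSet N m hinv S x) = f x} := by
        rw [nat_card_invariant_eq_pow_numCycles, Nat.card_zmod]
    _ = 2 * Nat.card (linkKernel (LinkedChord N m) S) := by
        rw [Nat.card_congr (invariantEquivLinkKernel hinv S), Nat.card_prod, Nat.card_zmod]

end ChordDiagram

theorem stmt_19_general (N N' : ℕ) [NeZero N] [NeZero N']
    (m : Equiv.Perm (Fin N)) (m' : Equiv.Perm (Fin N'))
    (hinv : ∀ x, m (m x) = x)
    (hinv' : ∀ x, m' (m' x) = x)
    (φ : ChordIdx N m ≃ ChordIdx N' m')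
    (hφ : ∀ i j, LinkedChord N m i j ↔ LinkedChord N' m' (φ i) (φ j))
    (S : Finset (ChordIdx N m)) :
    numCycles (smoothSet N m hinv S) = numCycles (smoothSet N' m' hinv' (S.image φ)) := by
  apply Nat.pow_right_injective le_rfl
  simp only [two_pow_numCycles_smoothSet, nat_card_linkKernel_congr φ hφ]

/-- If two chord diagrams (given by fixed-point-free involutions `m`, `m'` of
the points of a circle) have isomorphic intersection graphs via a bijection
`φ` of their chords, then for any subset `S` of chords, smoothing all chords of
`S` in the first diagram and all chords of `φ(S)` in the second yields
1-manifolds with the same number of circle components. -/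
theorem stmt_19 (N N' : ℕ) [NeZero N] [NeZero N']
    (m : Equiv.Perm (Fin N)) (m' : Equiv.Perm (Fin N'))
    (hinv : ∀ x, m (m x) = x) (hfree : ∀ x, m x ≠ x)
    (hinv' : ∀ x, m' (m' x) = x) (hfree' : ∀ x, m' x ≠ x)
    (φ : ChordIdx N m ≃ ChordIdx N' m')
    (hφ : ∀ i j, LinkedChord N m i j ↔ LinkedChord N' m' (φ i) (φ j))
    (S : Finset (ChordIdx N m)) :
    numCycles (smoothSet N m hinv S) = numCycles (smoothSet N' m' hinv' (S.image φ)) :=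
  stmt_19_general N N' m m' hinv hinv' φ hφ S
end
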